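/- For 0 ≤ k ≤ ⌊m/2⌋ and h ∈ H_{m-2k}, the composition A_{2-n} A_{4-n} acts on p = r^{2k} h as multiplication by (2m - 2k)(2m - 2k + 2)(2k + 2 - n)(2k + 4 - n). -/

import Mathlib

/-!
For `h` harmonic and homogeneous of degree `d`, the polynomial `r^{2k} h` is homogeneous of
degree `2k + d`, so Euler's identity makes `r∂_r` act on it as `2k + d`. The product rule
`Δ(r² p) = 2n p + 4 r∂_r p + r² Δp` then gives, by induction on `k`,
`r² Δ(r^{2k} h) = 2k(2k + 2d + n - 2) r^{2k} h`. Hence every `A_α` acts on `r^{2k} h` as a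
scalar; for `d = m - 2k` the scalars of `A_{4-n}` and `A_{2-n}` are `(2m - 2k + 2)(2k + 4 - n)`
and `(2m - 2k)(2k + 2 - n)`.
-/

open MvPolynomial

noncomputable section

/-- The polynomial Laplacian `Δp = ∑ ∂²p/∂xᵢ²` on `ℝ^n`. -/
def pLap (n : ℕ) (p : MvPolynomial (Fin n) ℝ) : MvPolynomial (Fin n) ℝ :=
  ∑ i : Fin n, pderiv i (pderiv i p)

/-- The polynomial `r² = |x|² = ∑ xᵢ²`. -/
def r2 (n : ℕ) : MvPolynomial (Fin n) ℝ := ∑ i : Fin n, X i ^ 2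

/-- The radial derivative `r∂_r p = ∑ xᵢ ∂p/∂xᵢ`. -/
def prdr (n : ℕ) (p : MvPolynomial (Fin n) ℝ) : MvPolynomial (Fin n) ℝ :=
  ∑ i : Fin n, X i * pderiv i p

/-- The operator `A_α = r²Δ + 2α r∂_r + α(α+n-2)`. -/
def Apol (n : ℕ) (α : ℝ) (p : MvPolynomial (Fin n) ℝ) : MvPolynomial (Fin n) ℝ :=
  r2 n * pLap n p + C (2 * α) * prdr n p + C (α * (α + (n : ℝ) - 2)) * p

/-- The operator `B_α = 2 r∂_r + (2α+n-2)`. -/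
def Bpol (n : ℕ) (α : ℝ) (p : MvPolynomial (Fin n) ℝ) : MvPolynomial (Fin n) ℝ :=
  C 2 * prdr n p + C (2 * α + (n : ℝ) - 2) * p



lemma prdr_C_mul (n : ℕ) (c : ℝ) (p : MvPolynomial (Fin n) ℝ) :
    prdr n (C c * p) = C c * prdr n p := by
  simp only [prdr, pderiv_C_mul, Finset.mul_sum, mul_left_comm]

lemma pLap_C_mul (n : ℕ) (c : ℝ) (p : MvPolynomial (Fin n) ℝ) :
    pLap n (C c * p) = C c * pLap n p := by
  simp only [pLap, pderiv_C_mul, Finset.mul_sum]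

lemma Apol_C_mul (n : ℕ) (α c : ℝ) (p : MvPolynomial (Fin n) ℝ) :
    Apol n α (C c * p) = C c * Apol n α p := by
  rw [Apol, Apol, pLap_C_mul, prdr_C_mul]
  ring

lemma prdr_eq_of_isHomogeneous {n d : ℕ} {p : MvPolynomial (Fin n) ℝ} (hp : p.IsHomogeneous d) :
    prdr n p = C (d : ℝ) * p := by
  rw [prdr, hp.sum_X_mul_pderiv, nsmul_eq_mul, map_natCast]

lemma r2_isHomogeneous (n : ℕ) : (r2 n).IsHomogeneous 2 :=
  IsHomogeneous.sum _ _ _ fun i _ => (isHomogeneous_X ℝ i).pow 2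

lemma pderiv_r2 {n : ℕ} (i : Fin n) : pderiv i (r2 n) = 2 * X i := by
  rw [r2, map_sum, Finset.sum_eq_single i (fun j _ hji => by simp [pderiv_X_of_ne hji]) (by simp)]
  simp

lemma pLap_r2_mul (n : ℕ) (p : MvPolynomial (Fin n) ℝ) :
    pLap n (r2 n * p) = C (2 * (n : ℝ)) * p + 4 * prdr n p + r2 n * pLap n p := by
  have hi : ∀ i : Fin n, pderiv i (pderiv i (r2 n * p)) =
      2 * p + 4 * (X i * pderiv i p) + r2 n * pderiv i (pderiv i p) := by
    intro i
    simp only [pderiv_mul, pderiv_r2, map_add, pderiv_X_self]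
    rw [show pderiv i (2 : MvPolynomial (Fin n) ℝ) = 0 from (pderiv i).map_natCast 2]
    ring
  simp only [pLap, prdr, hi, Finset.sum_add_distrib, ← Finset.mul_sum, Finset.sum_const,
    Finset.card_univ, Fintype.card_fin, nsmul_eq_mul, C_mul, map_natCast, map_ofNat]
  ring

lemma prdr_r2_pow_mul {n d : ℕ} (k : ℕ) {h : MvPolynomial (Fin n) ℝ} (hh : h.IsHomogeneous d) :
    prdr n (r2 n ^ k * h) = C (2 * (k : ℝ) + d) * (r2 n ^ k * h) := by
  rw [prdr_eq_of_isHomogeneous (((r2_isHomogeneous n).pow k).mul hh)]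
  push_cast
  rfl

lemma r2_mul_pLap_r2_pow_mul {n d : ℕ} (k : ℕ) {h : MvPolynomial (Fin n) ℝ}
    (hh : h.IsHomogeneous d) (hΔ : pLap n h = 0) :
    r2 n * pLap n (r2 n ^ k * h) = C (2 * (k : ℝ) * (2 * k + 2 * d + n - 2)) * (r2 n ^ k * h) := by
  induction k with
  | zero => simp [hΔ]
  | succ k ih =>
    have hcoeff : (C (2 * ((k + 1 : ℕ) : ℝ) * (2 * (k + 1 : ℕ) + 2 * d + n - 2)) :
        MvPolynomial (Fin n) ℝ) =
        C (2 * (n : ℝ)) + 4 * C (2 * (k : ℝ) + d) + C (2 * (k : ℝ) * (2 * k + 2 * d + n - 2)) := by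
      rw [← map_ofNat C 4, ← C_mul, ← C_add, ← C_add]
      congr 1
      push_cast
      ring
    rw [pow_succ', mul_assoc, pLap_r2_mul, prdr_r2_pow_mul k hh, mul_add, ih, hcoeff]
    ring

lemma Apol_r2_pow_mul {n d : ℕ} (α : ℝ) (k : ℕ) {h : MvPolynomial (Fin n) ℝ}
    (hh : h.IsHomogeneous d) (hΔ : pLap n h = 0) :
    Apol n α (r2 n ^ k * h) =
      C (2 * (k : ℝ) * (2 * k + 2 * d + n - 2) + 2 * α * (2 * k + d) + α * (α + n - 2)) *
        (r2 n ^ k * h) := by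
  rw [Apol, r2_mul_pLap_r2_pow_mul k hh hΔ, prdr_r2_pow_mul k hh]
  simp only [map_add, map_sub, map_mul]
  ring

/-- For `0 ≤ k ≤ ⌊m/2⌋` and `h ∈ H_{m-2k}` (harmonic homogeneous of degree
`m-2k`), the composition `A_{2-n} A_{4-n}` acts on `p = r^{2k} h` as multiplication by
`(2m - 2k)(2m - 2k + 2)(2k + 2 - n)(2k + 4 - n)`. -/
theorem stmt7 (n m k : ℕ) (hk : 2 * k ≤ m) (h : MvPolynomial (Fin n) ℝ)
    (hhom : h.IsHomogeneous (m - 2 * k)) (hharm : pLap n h = 0) :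
    Apol n (2 - (n : ℝ)) (Apol n (4 - (n : ℝ)) (r2 n ^ k * h)) =
      C ((2 * (m : ℝ) - 2 * (k : ℝ)) * (2 * (m : ℝ) - 2 * (k : ℝ) + 2) *
          (2 * (k : ℝ) + 2 - (n : ℝ)) * (2 * (k : ℝ) + 4 - (n : ℝ))) * (r2 n ^ k * h) := by
  rw [Apol_r2_pow_mul _ k hhom hharm, Apol_C_mul, Apol_r2_pow_mul _ k hhom hharm, ← mul_assoc,
    ← C_mul, Nat.cast_sub hk]
  congr 2
  push_cast
  ring
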